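/- For any type class T(P_X) of sequences of length n over a finite alphabet X with type P_X, the cardinality satisfies (n+1)^{-|X|} · 2^{n H(P_X)} ≤ |T(P_X)| ≤ 2^{n H(P_X)}, where H is the Shannon entropy in bits. -/

import Mathlib

open Finset

/-- Number of occurrences of the symbol `a` in the sequence `x`. -/
def cnt {𝒳 : Type*} [DecidableEq 𝒳] {n : ℕ} (a : 𝒳) (x : Fin n → 𝒳) : ℕ :=
  (Finset.univ.filter (fun i => x i = a)).card

open Nat

/-!
Write `q a = cnt a x0 / n`, so that `2 ^ (n H) = (∏ a, q a ^ cnt a x0)⁻¹`. By the multinomial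
theorem, `1 = (∑ a, q a) ^ n = ∑ₖ multinomial k * ∏ a, q a ^ k a`, summed over the count vectors
`k` of length `n`. The term at `k = cnt · x0` is `|T(P_X)| 2 ^ (-n H)`, since the type class is the
orbit of `x0` under permutations of positions and has `multinomial (cnt · x0)` elements. That
single term is at most `1`, which is the upper bound. It is also the largest term, because
`j ↦ m ^ j / j!` is maximal at `j = m`; as there are at most `(n + 1) ^ |X|` count vectors, this
gives the lower bound.
-/

theorem factorial_mul_pow_le_factorial_mul_pow_self (k j : ℕ) : k ! * k ^ j ≤ j ! * k ^ k := by
  rcases le_total j k with hjk | hkj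
  · have hk : k ! ≤ j ! * k ^ (k - j) := by
      rw [← factorial_mul_descFactorial (Nat.sub_le k j), Nat.sub_sub_self hjk]
      exact Nat.mul_le_mul_left _ (descFactorial_le_pow k _)
    calc k ! * k ^ j ≤ j ! * k ^ (k - j) * k ^ j := Nat.mul_le_mul_right _ hk
      _ = j ! * k ^ k := by rw [Nat.mul_assoc, ← pow_add, Nat.sub_add_cancel hjk]
  · have hj : k ! * k ^ (j - k) ≤ j ! := by
      calc k ! * k ^ (j - k) ≤ k ! * (k + 1) ^ (j - k) := by gcongr; omega
        _ ≤ (k + (j - k))! := factorial_mul_pow_le_factorial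
        _ = j ! := by rw [Nat.add_sub_cancel' hkj]
    calc k ! * k ^ j = k ! * k ^ (j - k) * k ^ k := by
          rw [Nat.mul_assoc, ← pow_add, Nat.sub_add_cancel hkj]
      _ ≤ j ! * k ^ k := Nat.mul_le_mul_right _ hj

theorem multinomial_mul_prod_pow_le {α : Type*} (s : Finset α) {k c : α → ℕ}
    (h : ∑ i ∈ s, k i = ∑ i ∈ s, c i) :
    multinomial s k * ∏ i ∈ s, c i ^ k i ≤ multinomial s c * ∏ i ∈ s, c i ^ c i := by
  have hpos : 0 < (∏ i ∈ s, (k i)!) * ∏ i ∈ s, (c i)! := by positivity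
  refine Nat.le_of_mul_le_mul_left ?_ hpos
  calc (∏ i ∈ s, (k i)!) * (∏ i ∈ s, (c i)!) * (multinomial s k * ∏ i ∈ s, c i ^ k i)
      = (∑ i ∈ s, k i)! * ∏ i ∈ s, ((c i)! * c i ^ k i) := by
        rw [← multinomial_spec, prod_mul_distrib]; ring
    _ ≤ (∑ i ∈ s, c i)! * ∏ i ∈ s, ((k i)! * c i ^ c i) := by
        rw [h]
        exact Nat.mul_le_mul_left _
          (prod_le_prod' fun i _ => factorial_mul_pow_le_factorial_mul_pow_self (c i) (k i))
    _ = (∏ i ∈ s, (k i)!) * (∏ i ∈ s, (c i)!) * (multinomial s c * ∏ i ∈ s, c i ^ c i) := by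
        rw [← multinomial_spec s c, prod_mul_distrib]; ring

theorem card_piAntidiag_le {α : Type*} [Fintype α] [DecidableEq α] (n : ℕ) :
    #(piAntidiag (univ : Finset α) n) ≤ (n + 1) ^ Fintype.card α := by
  calc #(piAntidiag (univ : Finset α) n) ≤ #(Fintype.piFinset fun _ : α => range (n + 1)) := by
        refine card_le_card fun k hk => ?_
        rw [mem_piAntidiag] at hk
        simp only [Fintype.mem_piFinset, mem_range, Nat.lt_succ_iff]
        intro a
        rw [← hk.1]
        exact single_le_sum (fun _ _ => Nat.zero_le _) (mem_univ a)
    _ = (n + 1) ^ Fintype.card α := by simp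

section EmpiricalDistribution

variable {α : Type*} [Fintype α] {c : α → ℕ} {n : ℕ}

theorem natCast_mul_div_eq (hc : ∑ a, c a = n) (a : α) : (n : ℝ) * (c a / n) = c a := by
  rcases n.eq_zero_or_pos with rfl | hn
  · simp [(sum_eq_zero_iff.1 hc a (mem_univ a))]
  · field_simp

theorem div_pos_of_sum_eq (hc : ∑ a, c a = n) {a : α} (ha : 0 < c a) : 0 < (c a / n : ℝ) := by
  have hn : 0 < n := hc ▸ ha.trans_le (single_le_sum (fun _ _ => Nat.zero_le _) (mem_univ a))
  positivity

theorem prod_div_pow_self_pos (hc : ∑ a, c a = n) : 0 < ∏ a, (c a / n : ℝ) ^ c a := by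
  refine prod_pos fun a _ => ?_
  rcases (c a).eq_zero_or_pos with hca | hca
  · simp [hca]
  · exact pow_pos (div_pos_of_sum_eq hc hca) _

theorem rpow_mul_neg_sum_mul_logb {b : ℝ} (hb₀ : 0 < b) (hb₁ : b ≠ 1) (hc : ∑ a, c a = n) :
    b ^ ((n : ℝ) * -∑ a, (c a / n : ℝ) * Real.logb b (c a / n)) = (∏ a, (c a / n : ℝ) ^ c a)⁻¹ := by
  have hfactor : ∀ a, b ^ (Real.logb b (c a / n) * c a) = (c a / n : ℝ) ^ c a := by
    intro a
    rcases (c a).eq_zero_or_pos with hca | hca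
    · simp [hca]
    · rw [Real.rpow_mul_natCast hb₀.le, Real.rpow_logb hb₀ hb₁ (div_pos_of_sum_eq hc hca)]
  rw [mul_neg, mul_sum, Real.rpow_neg hb₀.le, Real.rpow_sum_of_pos hb₀]
  congr 1
  refine prod_congr rfl fun a _ => ?_
  rw [← mul_assoc, natCast_mul_div_eq hc, mul_comm, hfactor]

theorem prod_div_pow_eq {k : α → ℕ} (hk : ∑ a, k a = n) :
    ∏ a, (c a / n : ℝ) ^ k a = (∏ a, c a ^ k a : ℕ) / (n : ℝ) ^ n := by
  rw [Nat.cast_prod, ← hk, ← prod_pow_eq_pow_sum, ← prod_div_distrib]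
  simp only [div_pow, Nat.cast_pow]

theorem multinomial_mul_prod_div_pow_le (hc : ∑ a, c a = n) {k : α → ℕ} (hk : ∑ a, k a = n) :
    (multinomial univ k : ℝ) * ∏ a, (c a / n : ℝ) ^ k a
      ≤ multinomial univ c * ∏ a, (c a / n : ℝ) ^ c a := by
  rw [prod_div_pow_eq hk, prod_div_pow_eq hc, mul_div_assoc', mul_div_assoc']
  refine div_le_div_of_nonneg_right ?_ (by positivity)
  exact_mod_cast multinomial_mul_prod_pow_le univ (hk.trans hc.symm)

variable [DecidableEq α]

theorem sum_multinomial_mul_prod_div_pow (hc : ∑ a, c a = n) :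
    ∑ k ∈ piAntidiag univ n, (multinomial univ k : ℝ) * ∏ a, (c a / n : ℝ) ^ k a = 1 := by
  rw [← sum_pow_eq_sum_piAntidiag]
  rcases n.eq_zero_or_pos with rfl | hn
  · exact pow_zero _
  · rw [← sum_div, ← Nat.cast_sum, hc, div_self (by positivity), one_pow]

theorem multinomial_mul_prod_div_pow_le_one (hc : ∑ a, c a = n) :
    (multinomial univ c : ℝ) * ∏ a, (c a / n : ℝ) ^ c a ≤ 1 := by
  rw [← sum_multinomial_mul_prod_div_pow hc]
  exact single_le_sum (f := fun k => (multinomial univ k : ℝ) * ∏ a, (c a / n : ℝ) ^ k a)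
    (fun _ _ => by positivity) (mem_piAntidiag.2 ⟨hc, fun a _ => mem_univ a⟩)

theorem one_le_mul_multinomial_mul_prod_div_pow (hc : ∑ a, c a = n) :
    1 ≤ ((n : ℝ) + 1) ^ Fintype.card α * (multinomial univ c * ∏ a, (c a / n : ℝ) ^ c a) := by
  calc (1 : ℝ) = ∑ k ∈ piAntidiag univ n, (multinomial univ k : ℝ) * ∏ a, (c a / n : ℝ) ^ k a :=
        (sum_multinomial_mul_prod_div_pow hc).symm
    _ ≤ ∑ _k ∈ piAntidiag univ n, (multinomial univ c : ℝ) * ∏ a, (c a / n : ℝ) ^ c a :=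
        sum_le_sum fun k hk => multinomial_mul_prod_div_pow_le hc (mem_piAntidiag.1 hk).1
    _ ≤ ((n : ℝ) + 1) ^ Fintype.card α * (multinomial univ c * ∏ a, (c a / n : ℝ) ^ c a) := by
        rw [sum_const, nsmul_eq_mul]
        gcongr
        exact_mod_cast card_piAntidiag_le n

end EmpiricalDistribution

section TypeClass

variable {𝒳 : Type*} [DecidableEq 𝒳] {n : ℕ}

theorem cnt_eq_card_subtype (a : 𝒳) (x : Fin n → 𝒳) : cnt a x = Fintype.card {i // x i = a} :=
  (Fintype.card_subtype _).symm

theorem cnt_comp_perm (a : 𝒳) (x : Fin n → 𝒳) (σ : Equiv.Perm (Fin n)) :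
    cnt a (x ∘ σ) = cnt a x := by
  simp only [cnt_eq_card_subtype]
  exact Fintype.card_congr (σ.subtypeEquiv fun _ => Iff.rfl)

theorem exists_perm_comp_eq_of_cnt_eq {x y : Fin n → 𝒳} (h : ∀ a, cnt a x = cnt a y) :
    ∃ σ : Equiv.Perm (Fin n), y ∘ σ = x := by
  have e : ∀ a, {i // x i = a} ≃ {i // y i = a} := fun a =>
    Fintype.equivOfCardEq (by simp only [← cnt_eq_card_subtype, h])
  refine ⟨(Equiv.sigmaFiberEquiv x).symm.trans
    ((Equiv.sigmaCongrRight e).trans (Equiv.sigmaFiberEquiv y)), funext fun i => ?_⟩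
  exact (e (x i) ⟨i, rfl⟩).2

theorem sum_cnt [Fintype 𝒳] (x : Fin n → 𝒳) : ∑ a, cnt a x = n := by
  simpa [cnt] using (card_eq_sum_card_fiberwise (f := x) (s := univ) (t := univ) (by simp)).symm

theorem orbit_perm_eq (x₀ : Fin n → 𝒳) :
    MulAction.orbit (Equiv.Perm (Fin n))ᵈᵐᵃ x₀ = {x | ∀ a, cnt a x = cnt a x₀} := by
  ext x
  constructor
  · rintro ⟨σ, rfl⟩ a
    exact cnt_comp_perm a x₀ _
  · intro h
    obtain ⟨σ, hσ⟩ := exists_perm_comp_eq_of_cnt_eq h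
    exact ⟨DomMulAct.mk σ, hσ⟩

theorem card_filter_cnt_eq [Fintype 𝒳] (x₀ : Fin n → 𝒳) :
    #{x : Fin n → 𝒳 | ∀ a, cnt a x = cnt a x₀} = multinomial univ (cnt · x₀) := by
  have hstab : Nat.card (MulAction.stabilizer (Equiv.Perm (Fin n))ᵈᵐᵃ x₀)
      = ∏ a, (cnt a x₀)! := by
    rw [Nat.card_congr (Equiv.subtypeEquiv (q := fun σ : Equiv.Perm (Fin n) => x₀ ∘ σ = x₀)
        DomMulAct.mk.symm fun _ => DomMulAct.mem_stabilizer_iff),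
      Nat.card_eq_fintype_card, DomMulAct.stabilizer_card]
    simp only [cnt_eq_card_subtype]
  have key := (MulAction.stabilizer (Equiv.Perm (Fin n))ᵈᵐᵃ x₀).card_mul_index
  rw [MulAction.index_stabilizer, orbit_perm_eq, hstab] at key
  rw [← coe_filter_univ, Set.ncard_coe_finset, Nat.card_congr DomMulAct.mk.symm, Nat.card_perm,
    Nat.card_eq_fintype_card, Fintype.card_fin] at key
  refine Nat.eq_of_mul_eq_mul_left (by positivity) (key.trans ?_)
  rw [multinomial_spec, sum_cnt]

end TypeClass

/-- size of a type class:
(n+1)^{-|𝒳|} 2^{n H(P_X)} ≤ |T(P_X)| ≤ 2^{n H(P_X)}. -/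
theorem type_class_size {𝒳 : Type*} [Fintype 𝒳] [DecidableEq 𝒳] (n : ℕ)
    (x0 : Fin n → 𝒳) :
    (((n : ℝ) + 1) ^ (Fintype.card 𝒳))⁻¹ *
        (2 : ℝ) ^ ((n : ℝ) * (-∑ a, ((cnt a x0 : ℝ) / n) * Real.logb 2 ((cnt a x0 : ℝ) / n)))
      ≤ ((Finset.univ.filter (fun x : Fin n → 𝒳 => ∀ a, cnt a x = cnt a x0)).card : ℝ)
    ∧ ((Finset.univ.filter (fun x : Fin n → 𝒳 => ∀ a, cnt a x = cnt a x0)).card : ℝ)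
      ≤ (2 : ℝ) ^ ((n : ℝ) * (-∑ a, ((cnt a x0 : ℝ) / n) * Real.logb 2 ((cnt a x0 : ℝ) / n))) := by
  have hc := sum_cnt x0
  have hP := prod_div_pow_self_pos hc
  rw [rpow_mul_neg_sum_mul_logb two_pos (by norm_num) hc, card_filter_cnt_eq]
  constructor
  · rw [inv_mul_le_iff₀ (by positivity), inv_le_iff_one_le_mul₀ hP, mul_assoc]
    exact one_le_mul_multinomial_mul_prod_div_pow hc
  · rw [← one_div, le_div_iff₀ hP]
    exact multinomial_mul_prod_div_pow_le_one hc
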